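/- Let A ∈ Mat_N(ℤ) with ρ(A) > 1, nonzero determinant, D = |det A|, eigenvalues ordered |λ₁| ≥ … ≥ |λ_N|, and A' = D·A^{-1}. Define ĥ_A(P) = ĥ_A⁺(P) + ĥ_{A'}⁺(P). Then for all P ∈ 𝔾_m^N(ℚ̄): ĥ_A(φ_A(P))/|λ₁λ_N| + ĥ_A(φ_{A'}(P))/D = (1/|λ₁| + 1/|λ_N|)·ĥ_A(P). -/

import Mathlib

open Filter NumberField IsDedekindDomain
open scoped Classical

noncomputable section

/-- The logarithm of the normalized absolute value of `a` at the finite place `v` of the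
number field `K`:  `log ‖a‖_v = -(additive valuation of a) * log (norm of v)`. -/
def finVal (K : Type*) [Field K] [NumberField K]
    (v : HeightOneSpectrum (𝓞 K)) (a : K) : ℝ :=
  if h : a = 0 then 0
  else (Multiplicative.toAdd (WithZero.unzero ((v.valuation K).ne_zero_iff.mpr h)) : ℤ) *
    Real.log (Ideal.absNorm v.asIdeal)

/-- The absolute logarithmic Weil height of a tuple of elements of a number field `K`:
`h(P) = Σ_{v ∈ M_K} max {0, log ‖x₁‖_v, …, log ‖x_N‖_v}` with suitably normalized
absolute values. -/
def logHeight (K : Type*) [Field K] [NumberField K] {N : ℕ} (x : Fin N → K) : ℝ :=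
  (Module.finrank ℚ K : ℝ)⁻¹ *
    ((∑ w : InfinitePlace K, (w.mult : ℝ) * ⨆ i, max 0 (Real.log (w (x i)))) +
     ∑ᶠ v : HeightOneSpectrum (𝓞 K), ⨆ i, max 0 (finVal K v (x i)))

/-- The height of a point of `𝔾_m^N(K)`. -/
def uHeight (K : Type*) [Field K] [NumberField K] {N : ℕ} (x : Fin N → Kˣ) : ℝ :=
  logHeight K (fun i => (x i : K))

/-- The monomial map associated to an integer matrix `A`:
`φ_A(x₁,…,x_N) = (∏ x_j^{a_{1j}}, …, ∏ x_j^{a_{Nj}})`. -/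
def phi {G : Type*} [CommGroup G] {N : ℕ} (A : Matrix (Fin N) (Fin N) ℤ)
    (x : Fin N → G) : Fin N → G :=
  fun i => ∏ j, (x j) ^ (A i j)

/-- ℓ_B : the least ℓ such that the entries of Bⁿ grow at most like nℓ·δⁿ
(for monomial maps, deg(φ_B^n) is comparable to the largest entry of Bⁿ, so this is
the exponent ℓ_B with ℓ_B + 1 the size of the largest Jordan block among eigenvalues
of maximal modulus δ = δ_B). -/
def ellOf {M : ℕ} (B : Matrix (Fin M) (Fin M) ℤ) (δ : ℝ) : ℕ :=
  sInf {ℓ : ℕ | ∃ C : ℝ, ∀ n : ℕ, (⨆ i, ⨆ j, |(((B ^ n) i j : ℤ) : ℝ)|) ≤ C * (n : ℝ) ^ ℓ * δ ^ n}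

/-- The canonical height ĥ_B⁺(P) = limsup h(φ_B^n(P))/(n^{ℓ_B}·δ_Bⁿ). -/
def hatPlus (K : Type*) [Field K] [NumberField K] {M : ℕ}
    (B : Matrix (Fin M) (Fin M) ℤ) (δ : ℝ) (P : Fin M → Kˣ) : ℝ :=
  Filter.limsup
    (fun n : ℕ => uHeight K ((phi B)^[n] P) / ((n : ℝ) ^ ellOf B δ * δ ^ n))
    Filter.atTop

/-- The total canonical height ĥ_A = ĥ_A⁺ + ĥ_{A'}⁺, where A' = sgn(det A)·adjugate A
= |det A|·A⁻¹, δ_A = |λ₁| and δ_{A'} = |λ₁⋯λ_{N-1}|. -/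
def hatTotal (K : Type*) [Field K] [NumberField K] {M : ℕ}
    (A : Matrix (Fin M) (Fin M) ℤ) (δA δA' : ℝ) (P : Fin M → Kˣ) : ℝ :=
  hatPlus K A δA P + hatPlus K (A.det.sign • A.adjugate) δA' P

/-! The orbit heights `h(φ_B^n P)` normalised by `n^ℓ δ^n` have a limsup that scales by `δ`
under the index shift `n ↦ n + 1`, since `((n+1)/n)^ℓ → 1`. This gives
`ĥ_B⁺(φ_B P) = δ_B ĥ_B⁺(P)`, and, when `B C = d • 1`, `φ_B^{n+1} ∘ φ_C = [d] ∘ φ_B^n` together with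
`h([d] Q) = d h(Q)` gives `ĥ_B⁺(φ_C P) = (d / δ_B) ĥ_B⁺(P)`. Applied to `A A' = A' A = D • 1`
with `D = δ_{A'} |λ_N|` (the determinant is the product of the eigenvalues), the four resulting
values of `ĥ_A⁺, ĥ_{A'}⁺` combine to the stated identity. -/

open Topology

section Limsup

variable {ι : Type*} {f : Filter ι} [f.NeBot] {a b : ι → ℝ} {c : ℝ}

theorem limsup_mul_of_tendsto (ha : 0 ≤ᶠ[f] a) (hb : Tendsto b f (𝓝 c)) (hc : 0 < c) :
    limsup (fun i => b i * a i) f = c * limsup a f := by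
  have hb_nonneg : 0 ≤ᶠ[f] b := (hb.eventually_const_lt hc).mono fun _ h => h.le
  have hb_bdd : IsBoundedUnder (· ≤ ·) f b := hb.isBoundedUnder_le
  by_cases ha_bdd : IsBoundedUnder (· ≤ ·) f a
  · apply le_antisymm
    · calc limsup (b * a) f ≤ limsup b f * limsup a f :=
            limsup_mul_le hb_nonneg.frequently hb_bdd ha ha_bdd
        _ = c * limsup a f := by rw [hb.limsup_eq]
    · calc c * limsup a f = limsup a f * liminf b f := by rw [hb.liminf_eq, mul_comm]
        _ ≤ limsup (a * b) f := le_limsup_mul ha.frequently ha_bdd hb_nonneg hb_bdd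
        _ = limsup (fun i => b i * a i) f := by simp only [Pi.mul_def, mul_comm]
  · -- `b > c / 2` eventually, so a bound on `b * a` bounds `a`; both limsups are then junk `0`.
    have hba_unbdd : ¬ IsBoundedUnder (· ≤ ·) f (fun i => b i * a i) := by
      rintro ⟨M, hM⟩
      refine ha_bdd ⟨2 * M / c, ?_⟩
      rw [eventually_map] at hM ⊢
      filter_upwards [hM, hb.eventually_const_lt (half_lt_self hc), ha] with i hMi hbi hai
      have : c / 2 * a i ≤ b i * a i := mul_le_mul_of_nonneg_right hbi.le hai
      rw [le_div_iff₀ hc]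
      linarith
    rw [Real.limsup_of_not_isBoundedUnder ha_bdd, Real.limsup_of_not_isBoundedUnder hba_unbdd,
      mul_zero]

end Limsup

theorem limsup_succ_div_pow_mul_pow {g : ℕ → ℝ} (hg : 0 ≤ g) (ℓ : ℕ) {δ : ℝ} (hδ : 0 < δ) :
    limsup (fun n : ℕ => g (n + 1) / ((n : ℝ) ^ ℓ * δ ^ n)) atTop =
      δ * limsup (fun n : ℕ => g n / ((n : ℝ) ^ ℓ * δ ^ n)) atTop := by
  set t : ℕ → ℝ := fun n => g n / ((n : ℝ) ^ ℓ * δ ^ n)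
  have hratio : Tendsto (fun n : ℕ => δ * (1 + (n : ℝ)⁻¹) ^ ℓ) atTop (𝓝 δ) := by
    have := (tendsto_const_nhds (x := (1 : ℝ))).add tendsto_inv_atTop_nhds_zero_nat
    simpa using (this.pow ℓ).const_mul δ
  have hshift : (fun n : ℕ => g (n + 1) / ((n : ℝ) ^ ℓ * δ ^ n)) =ᶠ[atTop]
      fun n => δ * (1 + (n : ℝ)⁻¹) ^ ℓ * t (n + 1) := by
    filter_upwards [eventually_ne_atTop 0] with n hn
    simp only [t]
    push_cast
    field_simp
    rw [div_pow]
    field_simp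
    ring
  have ht : 0 ≤ᶠ[atTop] fun n => t (n + 1) :=
    Eventually.of_forall fun n => div_nonneg (hg _) (by positivity)
  rw [limsup_congr hshift, limsup_mul_of_tendsto ht hratio hδ, limsup_nat_add t 1]

section Monomial

variable {G : Type*} [CommGroup G] {M : ℕ}

theorem Finset.prod_zpow_eq_zpow_sum {ι : Type*} (s : Finset ι) (f : ι → ℤ) (a : G) :
    ∏ i ∈ s, a ^ f i = a ^ ∑ i ∈ s, f i :=
  Finset.cons_induction (by simp)
    (fun _ _ _ ih ↦ by rw [Finset.prod_cons, Finset.sum_cons, zpow_add, ih]) s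

theorem phi_phi (A B : Matrix (Fin M) (Fin M) ℤ) (x : Fin M → G) :
    phi A (phi B x) = phi (A * B) x := by
  funext i
  simp only [phi, Matrix.mul_apply, ← Finset.prod_zpow, ← zpow_mul]
  rw [Finset.prod_comm]
  refine Finset.prod_congr rfl fun k _ => ?_
  rw [Finset.prod_zpow_eq_zpow_sum]
  simp only [mul_comm]

theorem phi_one (x : Fin M → G) : phi 1 x = x := by
  funext i
  simp [phi, Matrix.one_apply]

theorem phi_iterate (B : Matrix (Fin M) (Fin M) ℤ) (n : ℕ) :
    (phi B)^[n] = phi (B ^ n) (G := G) := by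
  induction n with
  | zero => funext x; exact (phi_one x).symm
  | succ n ih => funext x; rw [Function.iterate_succ_apply', ih, phi_phi, ← pow_succ']

theorem phi_nsmul (d : ℕ) (B : Matrix (Fin M) (Fin M) ℤ) (x : Fin M → G) :
    phi (d • B) x = phi B x ^ d := by
  funext i
  simp only [phi, Matrix.smul_apply, Pi.pow_apply, ← Finset.prod_pow, nsmul_eq_mul, mul_comm,
    zpow_mul, zpow_natCast]

end Monomial

section Height

variable (K : Type*) [Field K] [NumberField K] {M : ℕ}

theorem finVal_pow (v : HeightOneSpectrum (𝓞 K)) {a : K} (ha : a ≠ 0) (d : ℕ) :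
    finVal K v (a ^ d) = d * finVal K v a := by
  have hpow : a ^ d ≠ 0 := pow_ne_zero d ha
  have hval : WithZero.unzero ((v.valuation K).ne_zero_iff.mpr hpow) =
      WithZero.unzero ((v.valuation K).ne_zero_iff.mpr ha) ^ d := by
    rw [← WithZero.coe_inj, WithZero.coe_pow, WithZero.coe_unzero, WithZero.coe_unzero, map_pow]
  rw [finVal, finVal, dif_neg hpow, dif_neg ha, hval, toAdd_pow, nsmul_eq_mul]
  push_cast
  ring

theorem uHeight_nonneg (x : Fin M → Kˣ) : 0 ≤ uHeight K x := by
  have hsup : ∀ g : Fin M → ℝ, 0 ≤ ⨆ i, max 0 (g i) :=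
    fun g => Real.iSup_nonneg fun i => le_max_left _ _
  exact mul_nonneg (by positivity) (add_nonneg
    (Finset.sum_nonneg fun w _ => mul_nonneg (by positivity) (hsup _))
    (finsum_nonneg fun v => hsup _))

theorem iSup_max_zero_mul {ι : Type*} {r : ℝ} (hr : 0 ≤ r) (g : ι → ℝ) :
    ⨆ i, max 0 (r * g i) = r * ⨆ i, max 0 (g i) := by
  rw [Real.mul_iSup_of_nonneg hr]
  simp only [mul_max_of_nonneg _ _ hr, mul_zero]

theorem uHeight_pow (x : Fin M → Kˣ) (d : ℕ) : uHeight K (x ^ d) = d * uHeight K x := by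
  have hlog : ∀ (w : InfinitePlace K) i,
      Real.log (w ((x ^ d) i : K)) = d * Real.log (w (x i : K)) := fun w i => by
    rw [Pi.pow_apply, Units.val_pow_eq_pow_val, map_pow, Real.log_pow]
  have hfin : ∀ v i, finVal K v ((x ^ d) i : K) = d * finVal K v (x i) := fun v i => by
    rw [Pi.pow_apply, Units.val_pow_eq_pow_val, finVal_pow K v (x i).ne_zero]
  simp only [uHeight, logHeight, hlog, hfin, iSup_max_zero_mul (Nat.cast_nonneg d)]
  have hfinsum : ∀ F : HeightOneSpectrum (𝓞 K) → ℝ, ∑ᶠ v, (d : ℝ) * F v = d * ∑ᶠ v, F v :=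
    fun F => by simpa only [smul_eq_mul] using (smul_finsum (d : ℝ) F).symm
  simp only [hfinsum, mul_left_comm _ (d : ℝ), ← Finset.mul_sum]
  ring

variable {δ : ℝ} (B : Matrix (Fin M) (Fin M) ℤ)

theorem hatPlus_phi_self (hδ : 0 < δ) (P : Fin M → Kˣ) :
    hatPlus K B δ (phi B P) = δ * hatPlus K B δ P := by
  have hg : 0 ≤ fun n => uHeight K (phi (B ^ n) P) := fun n => uHeight_nonneg K _
  simp only [hatPlus, phi_iterate]
  rw [← limsup_succ_div_pow_mul_pow hg _ hδ]
  simp only [phi_phi, pow_succ]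

theorem hatPlus_phi_of_mul_eq_nsmul_one (hδ : 0 < δ) {C : Matrix (Fin M) (Fin M) ℤ} {d : ℕ}
    (hd : 0 < d) (hBC : B * C = d • 1) (P : Fin M → Kˣ) :
    hatPlus K B δ (phi C P) = d / δ * hatPlus K B δ P := by
  have hg : 0 ≤ fun n => uHeight K (phi (B ^ n) (phi C P)) := fun n => uHeight_nonneg K _
  have hstep : ∀ n, uHeight K (phi (B ^ (n + 1)) (phi C P)) = d * uHeight K (phi (B ^ n) P) :=
    fun n => by
      rw [phi_phi, pow_succ, mul_assoc, hBC, Matrix.mul_smul, mul_one, phi_nsmul, uHeight_pow]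
  have ht : 0 ≤ᶠ[atTop] fun n : ℕ => uHeight K (phi (B ^ n) P) / ((n : ℝ) ^ ellOf B δ * δ ^ n) :=
    Eventually.of_forall fun n => div_nonneg (uHeight_nonneg K _) (by positivity)
  have key := limsup_succ_div_pow_mul_pow hg (ellOf B δ) hδ
  simp only [hstep, mul_div_assoc] at key
  rw [limsup_mul_of_tendsto ht tendsto_const_nhds (Nat.cast_pos.2 hd)] at key
  simp only [hatPlus, phi_iterate]
  rw [div_mul_eq_mul_div, eq_div_iff hδ.ne', key, mul_comm]

end Height

namespace Matrix

variable {n : Type*} [Fintype n] [DecidableEq n]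

theorem det_eq_prod_of_charpoly_eq_prod {R : Type*} [CommRing R] (M : Matrix n n R)
    (lam : n → R) (h : M.charpoly = ∏ i, (Polynomial.X - Polynomial.C (lam i))) :
    M.det = ∏ i, lam i := by
  rw [det_eq_sign_charpoly_coeff, h, Polynomial.coeff_zero_prod]
  simp [Finset.prod_neg, ← mul_assoc, ← mul_pow]

theorem mul_sign_smul_adjugate (A : Matrix n n ℤ) :
    A * (A.det.sign • A.adjugate) = A.det.natAbs • (1 : Matrix n n ℤ) := by
  rw [Matrix.mul_smul, mul_adjugate, smul_smul, Int.sign_mul_self_eq_natAbs, natCast_zsmul]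

theorem sign_smul_adjugate_mul (A : Matrix n n ℤ) :
    (A.det.sign • A.adjugate) * A = A.det.natAbs • (1 : Matrix n n ℤ) := by
  rw [Matrix.smul_mul, adjugate_mul, smul_smul, Int.sign_mul_self_eq_natAbs, natCast_zsmul]

end Matrix

theorem statement9_general {N : ℕ} (A : Matrix (Fin (N + 1)) (Fin (N + 1)) ℤ) (hA : A.det ≠ 0)
    (lam : Fin (N + 1) → ℂ)
    (hchar : (A.map (Int.cast : ℤ → ℂ)).charpoly =
      ∏ i, (Polynomial.X - Polynomial.C (lam i)))
    (hρ : 1 < ‖lam 0‖)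
    (K : Type*) [Field K] [NumberField K] (P : Fin (N + 1) → Kˣ) :
    hatTotal K A (‖lam 0‖) (∏ i : Fin N, ‖lam i.castSucc‖)
        (phi A P) / (‖lam 0‖ * ‖lam (Fin.last N)‖) +
      hatTotal K A (‖lam 0‖) (∏ i : Fin N, ‖lam i.castSucc‖)
        (phi (A.det.sign • A.adjugate) P) / (A.det.natAbs : ℝ)
    = (1 / ‖lam 0‖ + 1 / ‖lam (Fin.last N)‖) *
        hatTotal K A (‖lam 0‖) (∏ i : Fin N, ‖lam i.castSucc‖) P := by
  have hdet : (A.det.natAbs : ℝ) = ∏ i, ‖lam i‖ := by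
    rw [← norm_prod, ← Matrix.det_eq_prod_of_charpoly_eq_prod _ _ hchar, ← Int.cast_det,
      Complex.norm_intCast, Nat.cast_natAbs, Int.cast_abs]
  have hd : 0 < A.det.natAbs := Int.natAbs_pos.2 hA
  have hlam : ∀ i, 0 < ‖lam i‖ := fun i => (norm_nonneg _).lt_of_ne' <|
    Finset.prod_ne_zero_iff.1 (hdet ▸ Nat.cast_ne_zero.2 hd.ne') i (Finset.mem_univ i)
  set δ := ‖lam 0‖
  set δ' := ∏ i : Fin N, ‖lam i.castSucc‖
  set Λ := ‖lam (Fin.last N)‖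
  have hδ : 0 < δ := one_pos.trans hρ
  have hδ' : 0 < δ' := Finset.prod_pos fun i _ => hlam _
  have hΛ : 0 < Λ := hlam _
  have hdet' : (A.det.natAbs : ℝ) = δ' * Λ := by rw [hdet, Fin.prod_univ_castSucc]
  simp only [hatTotal]
  rw [hatPlus_phi_self K A hδ, hatPlus_phi_self K (A.det.sign • A.adjugate) hδ',
    hatPlus_phi_of_mul_eq_nsmul_one K A hδ hd A.mul_sign_smul_adjugate,
    hatPlus_phi_of_mul_eq_nsmul_one K _ hδ' hd A.sign_smul_adjugate_mul, hdet']
  field_simp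
  ring

/-- The functional equation of the total canonical height:
ĥ_A(φ_A(P))/|λ₁λ_N| + ĥ_A(φ_{A'}(P))/D = (1/|λ₁| + 1/|λ_N|)·ĥ_A(P). -/
theorem statement9 {N : ℕ} (A : Matrix (Fin (N + 1)) (Fin (N + 1)) ℤ) (hA : A.det ≠ 0)
    (lam : Fin (N + 1) → ℂ)
    (hchar : (A.map (Int.cast : ℤ → ℂ)).charpoly =
      ∏ i, (Polynomial.X - Polynomial.C (lam i)))
    (hmono : ∀ i j : Fin (N + 1), i ≤ j → ‖lam j‖ ≤ ‖lam i‖)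
    (hρ : 1 < ‖lam 0‖)
    (K : Type*) [Field K] [NumberField K] (P : Fin (N + 1) → Kˣ) :
    hatTotal K A (‖lam 0‖) (∏ i : Fin N, ‖lam i.castSucc‖)
        (phi A P) / (‖lam 0‖ * ‖lam (Fin.last N)‖) +
      hatTotal K A (‖lam 0‖) (∏ i : Fin N, ‖lam i.castSucc‖)
        (phi (A.det.sign • A.adjugate) P) / (A.det.natAbs : ℝ)
    = (1 / ‖lam 0‖ + 1 / ‖lam (Fin.last N)‖) *
        hatTotal K A (‖lam 0‖) (∏ i : Fin N, ‖lam i.castSucc‖) P :=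
  statement9_general A hA lam hchar hρ K P
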